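/- Let B be a finite group which is an extension of a finite abelian group C by a finite abelian normal subgroup A. Then every irreducible complex representation of B restricts to A with all irreducible constituents appearing with multiplicity 1 if and only if the extension has trivial commutator, i.e., for all c₁, c₂ ∈ C the commutator f(c₁,c₂) = s(c₁)s(c₂)s(c₁)⁻¹s(c₂)⁻¹ of lifts vanishes in the coinvariant group A_{⟨c₁,c₂⟩}. -/

import Mathlib

open Module

/-- The `χ`-isotypic subspace for the restriction of `π` to the abelian subgroup `A`:
the space of vectors on which `A` acts through the character `χ`. -/
def charEigenspace {B : Type} [Group B] {V : Type} [AddCommGroup V] [Module ℂ V]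
    (π : Representation ℂ B V) (A : Subgroup B) (χ : A →* ℂˣ) : Submodule ℂ V where
  carrier := {v | ∀ a : A, π a v = (χ a : ℂ) • v}
  add_mem' := by
    intro x y hx hy a
    simp only [map_add, hx a, hy a, smul_add]
  zero_mem' := by intro a; simp
  smul_mem' := by
    intro c x hx a
    simp only [map_smul, hx a]
    rw [smul_comm]

/-- A representation is irreducible if the space is nonzero and the only invariant
submodules are `⊥` and `⊤`. -/
def IsIrred {G : Type} [Group G] {V : Type} [AddCommGroup V] [Module ℂ V]
    (ρ : Representation ℂ G V) : Prop :=
  Nontrivial V ∧ ∀ W : Submodule ℂ V, (∀ g : G, W.map (ρ g) ≤ W) → W = ⊥ ∨ W = ⊤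

/-- The subgroup of `A`-differences measuring coinvariants: the subgroup of `B` generated
by the elements `a * (γ·a)⁻¹` for `a ∈ A` and `γ` ranging over (lifts to `B` of) the
subgroup of `B ⧸ A` generated by `c₁` and `c₂`, acting by conjugation. -/
def coinvariantDifferences {B : Type} [Group B] (A : Subgroup B) [A.Normal]
    (c₁ c₂ : B ⧸ A) : Subgroup B :=
  Subgroup.closure
    {x : B | ∃ a b : B, a ∈ A ∧
      (QuotientGroup.mk b : B ⧸ A) ∈ Subgroup.closure {c₁, c₂} ∧
      x = a * (b * a * b⁻¹)⁻¹}

/-!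
Both sides say that for every character `χ` of `A`, the commutators of the stabilizer `S_χ` of `χ`
under conjugation lie in `ker χ`.

On the representation side, `S_χ` preserves the `χ`-eigenspace `V_χ` and
`b₁ b₂ = χ⁅b₁, b₂⁆ • b₂ b₁` there. If the condition holds, `S_χ` acts on `V_χ` by commuting
operators. For irreducible `V`, any nonzero `S_χ`-stable `W ≤ V_χ` has `B`-translates spanning
`V`, and averaging against `χ` over `A` kills the translates by `b ∉ S_χ` (they lie in other
eigenspaces), so `V_χ ≤ W`: hence every element of `S_χ` is a scalar on `V_χ` and `V_χ` is a line.
Conversely, an irreducible subquotient of the regular representation with `V_χ ≠ 0` has `V_χ` a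
line, on which `b₁, b₂ ∈ S_χ` act by scalars, so `χ⁅b₁, b₂⁆ = 1`.

On the group side, a character kills `coinvariantDifferences A c₁ c₂` exactly when lifts of
`⟨c₁, c₂⟩` stabilize it (`A` itself does, being abelian), and characters of the finite abelian
group `A_⟨c₁,c₂⟩` separate its points.
-/

open scoped commutatorElement

section Irreducible

variable {B : Type} [Group B] {A : Subgroup B}
  {V : Type} [AddCommGroup V] [Module ℂ V] {π : Representation ℂ B V}

theorem charEigenspace_subrepresentation_ne_bot {W : Submodule ℂ V}
    (hW : ∀ g, W ≤ W.comap (π g)) {χ : A →* ℂˣ} (h : charEigenspace π A χ ⊓ W ≠ ⊥) :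
    charEigenspace (π.subrepresentation W hW) A χ ≠ ⊥ := by
  obtain ⟨v, hv, hv0⟩ := (Submodule.ne_bot_iff _).mp h
  obtain ⟨hvχ, hvW⟩ := Submodule.mem_inf.mp hv
  exact (Submodule.ne_bot_iff _).mpr
    ⟨⟨v, hvW⟩, fun a => Subtype.ext (hvχ a), by simpa using hv0⟩

theorem charEigenspace_quotient_ne_bot {W : Submodule ℂ V} (hW : ∀ g, W ≤ W.comap (π g))
    {χ : A →* ℂˣ} (h0 : charEigenspace π A χ ≠ ⊥) (h : charEigenspace π A χ ⊓ W = ⊥) :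
    charEigenspace (π.quotient W hW) A χ ≠ ⊥ := by
  obtain ⟨v, hv, hv0⟩ := (Submodule.ne_bot_iff _).mp h0
  refine (Submodule.ne_bot_iff _).mpr ⟨W.mkQ v, fun a => ?_, ?_⟩
  · rw [Representation.quotient_apply, Submodule.mkQ_apply, Submodule.mapQ_apply, hv a]
    rfl
  · rw [Ne, Submodule.mkQ_apply, Submodule.Quotient.mk_eq_zero]
    intro hvW
    have hvbot : v ∈ charEigenspace π A χ ⊓ W := Submodule.mem_inf.mpr ⟨hv, hvW⟩
    rw [h, Submodule.mem_bot] at hvbot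
    exact hv0 hvbot

theorem exists_isIrred_charEigenspace_ne_bot [FiniteDimensional ℂ V] {χ : A →* ℂˣ}
    (π : Representation ℂ B V) (h : charEigenspace π A χ ≠ ⊥) :
    ∃ (W : Type) (_ : AddCommGroup W) (_ : Module ℂ W) (_ : FiniteDimensional ℂ W)
      (ρ : Representation ℂ B W), IsIrred ρ ∧ charEigenspace ρ A χ ≠ ⊥ := by
  induction hn : finrank ℂ V using Nat.strong_induction_on generalizing V with
  | _ n ih =>
  by_cases hπ : IsIrred π
  · exact ⟨V, _, _, inferInstance, π, hπ, h⟩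
  have : Nontrivial V := by
    obtain ⟨v, -, hv0⟩ := (Submodule.ne_bot_iff _).mp h
    exact ⟨⟨v, 0, hv0⟩⟩
  obtain ⟨W, hW, hWbot, hWtop⟩ :
      ∃ W : Submodule ℂ V, (∀ g, W.map (π g) ≤ W) ∧ W ≠ ⊥ ∧ W ≠ ⊤ := by
    simpa [IsIrred, this, not_or] using hπ
  have hW' : ∀ g, W ≤ W.comap (π g) := fun g => Submodule.map_le_iff_le_comap.mp (hW g)
  by_cases hχW : charEigenspace π A χ ⊓ W = ⊥
  · have hlt : finrank ℂ (V ⧸ W) < n := by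
      have := Submodule.finrank_quotient_add_finrank W
      have := Submodule.finrank_eq_zero.not.mpr hWbot
      omega
    exact ih _ hlt (π.quotient W hW') (charEigenspace_quotient_ne_bot hW' h hχW) rfl
  · exact ih _ (hn ▸ Submodule.finrank_lt hWtop) (π.subrepresentation W hW')
      (charEigenspace_subrepresentation_ne_bot hW' hχW) rfl

theorem charEigenspace_leftRegular_ne_bot [Finite A] (χ : A →* ℂˣ) :
    charEigenspace (Representation.leftRegular ℂ B) A χ ≠ ⊥ := by
  have := Fintype.ofFinite A
  classical
  let v : MonoidAlgebra ℂ B := ∑ c : A, MonoidAlgebra.single (c : B) (χ c⁻¹ : ℂ)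
  refine (Submodule.ne_bot_iff _).mpr ⟨v, fun a => ?_, fun hv => ?_⟩
  · simp only [v, map_sum, Representation.ofMulAction_single, smul_eq_mul, Finset.smul_sum,
      MonoidAlgebra.smul_single']
    refine Fintype.sum_equiv (Equiv.mulLeft a) _ _ fun c => ?_
    simp only [Equiv.coe_mulLeft, Subgroup.coe_mul, mul_inv_rev, map_mul, map_inv, Units.val_mul,
      Units.val_inv_eq_inv_val]
    rw [mul_comm, mul_assoc, inv_mul_cancel₀ (Units.ne_zero _), mul_one]
  · have hv1 := congrArg (fun x => x.coeff 1) hv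
    simp [v, MonoidAlgebra.coeff_sum, Finsupp.single_apply] at hv1

end Irreducible

section Stabilizer

variable {B : Type} [Group B] {A : Subgroup B}

theorem apply_eq_one_of_mem_map_ker {χ : A →* ℂˣ} {x : B} (hx : x ∈ χ.ker.map A.subtype)
    (h : x ∈ A) : χ ⟨x, h⟩ = 1 := by
  obtain ⟨a, ha, rfl⟩ := hx
  exact ha

variable [A.Normal]

instance : MulAction B (A →* ℂˣ) where
  smul b χ := χ.comp (MulAut.conjNormal b⁻¹).toMonoidHom
  one_smul χ := by
    ext a
    show (χ (MulAut.conjNormal 1⁻¹ a) : ℂ) = χ a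
    simp
  mul_smul b c χ := by
    ext a
    show (χ (MulAut.conjNormal (b * c)⁻¹ a) : ℂ) =
      χ (MulAut.conjNormal c⁻¹ (MulAut.conjNormal b⁻¹ a))
    simp

theorem conj_smul_apply (b : B) (χ : A →* ℂˣ) (a : A) :
    (b • χ) a = χ (MulAut.conjNormal b⁻¹ a) := rfl

theorem mem_stabilizer_iff_conj {χ : A →* ℂˣ} {b : B} :
    b ∈ MulAction.stabilizer B χ ↔ ∀ a : A, χ (MulAut.conjNormal b a) = χ a := by
  rw [← inv_mem_iff, MulAction.mem_stabilizer_iff, DFunLike.ext_iff]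
  simp only [conj_smul_apply, inv_inv]

open scoped IsMulCommutative in
theorem le_stabilizer_of_isMulCommutative [IsMulCommutative A] (χ : A →* ℂˣ) :
    A ≤ MulAction.stabilizer B χ := by
  intro b hb
  refine mem_stabilizer_iff_conj.mpr fun a => congrArg χ (Subtype.ext ?_)
  have hba : b * a = a * b := congrArg Subtype.val (mul_comm (⟨b, hb⟩ : A) a)
  rw [MulAut.conjNormal_apply, hba, mul_inv_cancel_right]

end Stabilizer

section Eigenspace

variable {B : Type} [Group B] {A : Subgroup B}
  {V : Type} [AddCommGroup V] [Module ℂ V] (π : Representation ℂ B V)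

noncomputable def charProjection [Fintype A] (χ : A →* ℂˣ) : Module.End ℂ V :=
  (Fintype.card A : ℂ)⁻¹ • ∑ a : A, (χ a : ℂ)⁻¹ • π a

variable {π}

theorem charProjection_apply_of_mem [Fintype A] {χ : A →* ℂˣ} {v : V}
    (hv : v ∈ charEigenspace π A χ) : charProjection π χ v = v := by
  rw [charProjection, LinearMap.smul_apply, LinearMap.sum_apply]
  simp only [LinearMap.smul_apply, hv _, smul_smul, inv_mul_cancel₀ (Units.ne_zero _), one_smul,
    Finset.sum_const, Finset.card_univ]
  rw [← Nat.cast_smul_eq_nsmul ℂ, smul_smul,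
    inv_mul_cancel₀ (Nat.cast_ne_zero.mpr Fintype.card_ne_zero), one_smul]

theorem charProjection_apply_of_mem_of_ne [Fintype A] {χ ψ : A →* ℂˣ} (hψ : ψ ≠ χ) {v : V}
    (hv : v ∈ charEigenspace π A ψ) : charProjection π χ v = 0 := by
  have hsum : ∑ a : A, (χ a : ℂ)⁻¹ * ψ a = 0 := by
    simpa [mul_comm] using sum_hom_units_eq_zero ((Units.coeHom ℂ).comp (χ⁻¹ * ψ))
      (fun h => hψ (inv_mul_eq_one.mp (MonoidHom.ext fun a => Units.ext
        (DFunLike.congr_fun h a))).symm)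
  rw [charProjection, LinearMap.smul_apply, LinearMap.sum_apply]
  simp only [LinearMap.smul_apply, hv _, smul_smul, ← Finset.sum_smul, hsum, zero_smul, smul_zero]

variable [A.Normal]

theorem map_charEigenspace_le (χ : A →* ℂˣ) (b : B) :
    (charEigenspace π A χ).map (π b) ≤ charEigenspace π A (b • χ) := by
  rintro _ ⟨v, hv, rfl⟩ a
  have hconj : (a : B) * b = b * (MulAut.conjNormal b⁻¹ a : B) := by
    simp [mul_assoc]
  rw [← Module.End.mul_apply, ← map_mul, hconj, map_mul, Module.End.mul_apply, hv, map_smul]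
  rfl

theorem apply_mem_charEigenspace {χ : A →* ℂˣ} {b : B} (hb : b ∈ MulAction.stabilizer B χ)
    {v : V} (hv : v ∈ charEigenspace π A χ) : π b v ∈ charEigenspace π A χ := by
  have := map_charEigenspace_le χ b (Submodule.mem_map_of_mem hv)
  rwa [MulAction.mem_stabilizer_iff.mp hb] at this

theorem apply_apply_eq_commutator_smul {χ : A →* ℂˣ} {b₁ b₂ : B}
    (hb₁ : b₁ ∈ MulAction.stabilizer B χ) (hb₂ : b₂ ∈ MulAction.stabilizer B χ)
    (h : ⁅b₁, b₂⁆ ∈ A) {v : V} (hv : v ∈ charEigenspace π A χ) :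
    π b₁ (π b₂ v) = (χ ⟨⁅b₁, b₂⁆, h⟩ : ℂ) • π b₂ (π b₁ v) := by
  have hw := apply_mem_charEigenspace hb₂ (apply_mem_charEigenspace hb₁ hv)
  rw [← hw ⟨_, h⟩]
  simp only [← Module.End.mul_apply, ← map_mul, commutatorElement_def]
  congr 2
  group

theorem apply_apply_comm_of_commutator_le {χ : A →* ℂˣ}
    (hχ : ⁅MulAction.stabilizer B χ, MulAction.stabilizer B χ⁆ ≤ χ.ker.map A.subtype)
    {b₁ b₂ : B} (hb₁ : b₁ ∈ MulAction.stabilizer B χ) (hb₂ : b₂ ∈ MulAction.stabilizer B χ)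
    {v : V} (hv : v ∈ charEigenspace π A χ) : π b₁ (π b₂ v) = π b₂ (π b₁ v) := by
  have hmem := hχ (Subgroup.commutator_mem_commutator hb₁ hb₂)
  rw [apply_apply_eq_commutator_smul hb₁ hb₂ (Subgroup.map_subtype_le _ hmem) hv,
    apply_eq_one_of_mem_map_ker hmem, Units.val_one, one_smul]

end Eigenspace

section Multiplicity

variable {B : Type} [Group B] {A : Subgroup B} [A.Normal]
  {V : Type} [AddCommGroup V] [Module ℂ V] {π : Representation ℂ B V}

theorem charEigenspace_le_of_forall_map_le [Finite A] (hπ : IsIrred π) {χ : A →* ℂˣ}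
    {W : Submodule ℂ V} (hWχ : W ≤ charEigenspace π A χ) (hW : W ≠ ⊥)
    (hWS : ∀ b ∈ MulAction.stabilizer B χ, W.map (π b) ≤ W) :
    charEigenspace π A χ ≤ W := by
  have := Fintype.ofFinite A
  let U := ⨆ b : B, W.map (π b)
  have hU : U = ⊤ := by
    refine (hπ.2 U fun g => ?_).resolve_left ?_
    · rw [Submodule.map_iSup]
      refine iSup_le fun b => ?_
      rw [← Submodule.map_comp, ← Module.End.mul_eq_comp, ← map_mul]
      exact le_iSup (fun b => W.map (π b)) (g * b)
    · refine ne_bot_of_le_ne_bot hW ?_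
      simpa [U, Module.End.one_eq_id] using le_iSup (fun b => W.map (π b)) 1
  have hUP : U ≤ W.comap (charProjection π χ) := iSup_le fun b => by
    rintro _ ⟨w, hw, rfl⟩
    rw [Submodule.mem_comap]
    by_cases hb : b ∈ MulAction.stabilizer B χ
    · have hbw := hWS b hb ⟨w, hw, rfl⟩
      rwa [charProjection_apply_of_mem (hWχ hbw)]
    · rw [charProjection_apply_of_mem_of_ne hb (map_charEigenspace_le χ b ⟨w, hWχ hw, rfl⟩)]
      exact W.zero_mem
  intro v hv
  rw [← charProjection_apply_of_mem hv]
  exact hUP (hU ▸ Submodule.mem_top)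

variable [FiniteDimensional ℂ V]

theorem apply_commutator_eq_one_of_finrank_le_one {χ : A →* ℂˣ}
    (h0 : charEigenspace π A χ ≠ ⊥) (h1 : finrank ℂ (charEigenspace π A χ) ≤ 1) {b₁ b₂ : B}
    (hb₁ : b₁ ∈ MulAction.stabilizer B χ) (hb₂ : b₂ ∈ MulAction.stabilizer B χ)
    (h : ⁅b₁, b₂⁆ ∈ A) : χ ⟨⁅b₁, b₂⁆, h⟩ = 1 := by
  obtain ⟨v, hv, hv0⟩ := (Submodule.ne_bot_iff _).mp h0
  have hspan : ℂ ∙ v = charEigenspace π A χ :=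
    Submodule.eq_of_le_of_finrank_le ((Submodule.span_singleton_le_iff_mem v _).mpr hv)
      (h1.trans (finrank_span_singleton hv0).ge)
  have hscalar : ∀ b ∈ MulAction.stabilizer B χ, ∃ μ : ℂ, μ • v = π b v := fun b hb =>
    Submodule.mem_span_singleton.mp (hspan ▸ apply_mem_charEigenspace hb hv)
  obtain ⟨μ₁, hμ₁⟩ := hscalar b₁ hb₁
  obtain ⟨μ₂, hμ₂⟩ := hscalar b₂ hb₂
  have hcomm : π b₁ (π b₂ v) = π b₂ (π b₁ v) := by
    rw [← hμ₁, ← hμ₂, map_smul, map_smul, ← hμ₁, ← hμ₂, smul_comm]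
  have hw0 : π b₂ (π b₁ v) ≠ 0 := by
    rw [← Module.End.mul_apply, ← map_mul]
    exact (map_ne_zero_iff _ (π.apply_bijective _).injective).mpr hv0
  have hfix := apply_apply_eq_commutator_smul hb₁ hb₂ h hv
  rw [hcomm] at hfix
  exact Units.ext (smul_left_injective ℂ hw0 (hfix.symm.trans (one_smul ℂ _).symm))

variable [Finite A] (hπ : IsIrred π) {χ : A →* ℂˣ}
  (hχ : ⁅MulAction.stabilizer B χ, MulAction.stabilizer B χ⁆ ≤ χ.ker.map A.subtype)
include hπ hχ

theorem exists_forall_charEigenspace_apply_eq_smul {b₀ : B}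
    (hb₀ : b₀ ∈ MulAction.stabilizer B χ) :
    ∃ μ : ℂ, ∀ v ∈ charEigenspace π A χ, π b₀ v = μ • v := by
  rcases eq_or_ne (charEigenspace π A χ) ⊥ with h | h
  · refine ⟨0, fun v hv => ?_⟩
    rw [h, Submodule.mem_bot] at hv
    simp [hv]
  have := Submodule.nontrivial_iff_ne_bot.mpr h
  let T := (π b₀).restrict fun v hv => apply_mem_charEigenspace hb₀ hv
  obtain ⟨μ, hμ⟩ := Module.End.exists_eigenvalue T
  obtain ⟨x, hx, hx0⟩ := hμ.exists_hasEigenvector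
  refine ⟨μ, fun v hv => ?_⟩
  let W := charEigenspace π A χ ⊓ Module.End.eigenspace (π b₀) μ
  have hW : W ≠ ⊥ := by
    refine (Submodule.ne_bot_iff W).mpr ⟨x, Submodule.mem_inf.mpr ⟨x.2, ?_⟩, by simpa using hx0⟩
    rw [Module.End.mem_eigenspace_iff] at hx ⊢
    exact congrArg Subtype.val hx
  have hWS : ∀ b ∈ MulAction.stabilizer B χ, W.map (π b) ≤ W := by
    rintro b hb _ ⟨w, hw, rfl⟩
    obtain ⟨hwχ, hwμ⟩ := Submodule.mem_inf.mp hw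
    refine Submodule.mem_inf.mpr ⟨apply_mem_charEigenspace hb hwχ, ?_⟩
    rw [Module.End.mem_eigenspace_iff] at hwμ ⊢
    rw [apply_apply_comm_of_commutator_le hχ hb₀ hb hwχ, hwμ, map_smul]
  exact (Module.End.mem_eigenspace_iff.mp
    (Submodule.mem_inf.mp (charEigenspace_le_of_forall_map_le hπ inf_le_left hW hWS hv)).2)

theorem finrank_charEigenspace_le_one : finrank ℂ (charEigenspace π A χ) ≤ 1 := by
  rcases eq_or_ne (charEigenspace π A χ) ⊥ with h | h
  · rw [h, finrank_bot]
    exact zero_le_one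
  obtain ⟨v, hv, hv0⟩ := (Submodule.ne_bot_iff _).mp h
  have hWS : ∀ b ∈ MulAction.stabilizer B χ, (ℂ ∙ v).map (π b) ≤ ℂ ∙ v := by
    intro b hb
    obtain ⟨μ, hμ⟩ := exists_forall_charEigenspace_apply_eq_smul hπ hχ hb
    rw [Submodule.map_span, Set.image_singleton, Submodule.span_singleton_le_iff_mem, hμ v hv]
    exact Submodule.smul_mem _ μ (Submodule.mem_span_singleton_self v)
  have hle := charEigenspace_le_of_forall_map_le hπ
    ((Submodule.span_singleton_le_iff_mem v _).mpr hv) (by simpa using hv0) hWS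
  calc finrank ℂ (charEigenspace π A χ) ≤ finrank ℂ (ℂ ∙ v) := Submodule.finrank_mono hle
    _ = 1 := finrank_span_singleton hv0

end Multiplicity

theorem exists_le_ker_apply_ne_one {G : Type*} [CommGroup G] [Finite G] {H : Subgroup G}
    {x : G} (hx : x ∉ H) : ∃ χ : G →* ℂˣ, H ≤ χ.ker ∧ χ x ≠ 1 := by
  have : NeZero (Monoid.exponent (G ⧸ H) : ℂ) :=
    ⟨Nat.cast_ne_zero.mpr Monoid.exponent_ne_zero_of_finite⟩
  obtain ⟨ψ, hψ⟩ := CommGroup.exists_apply_ne_one_of_hasEnoughRootsOfUnity (G ⧸ H) ℂ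
    (mt (QuotientGroup.eq_one_iff x).mp hx)
  exact ⟨ψ.comp (QuotientGroup.mk' H),
    fun h hh => by simp [(QuotientGroup.eq_one_iff h).mpr hh], hψ⟩

section Coinvariants

variable {B : Type} [Group B] {A : Subgroup B} [A.Normal] {χ : A →* ℂˣ}

theorem coinvariantDifferences_le_map_ker [IsMulCommutative A] {b₁ b₂ : B}
    (hb₁ : b₁ ∈ MulAction.stabilizer B χ) (hb₂ : b₂ ∈ MulAction.stabilizer B χ) :
    coinvariantDifferences A b₁ b₂ ≤ χ.ker.map A.subtype := by
  have hS : ∀ b : B, (b : B ⧸ A) ∈ Subgroup.closure {(b₁ : B ⧸ A), (b₂ : B ⧸ A)} →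
      b ∈ MulAction.stabilizer B χ := by
    intro b hb
    have hle : Subgroup.closure {(b₁ : B ⧸ A), (b₂ : B ⧸ A)} ≤
        (MulAction.stabilizer B χ).map (QuotientGroup.mk' A) := by
      rw [Subgroup.closure_le]
      rintro _ (rfl | rfl)
      exacts [⟨b₁, hb₁, rfl⟩, ⟨b₂, hb₂, rfl⟩]
    rw [← Subgroup.comap_map_eq_self
      ((QuotientGroup.ker_mk' A).trans_le (le_stabilizer_of_isMulCommutative χ))]
    exact hle hb
  rw [coinvariantDifferences, Subgroup.closure_le]
  rintro _ ⟨a, b, ha, hb, rfl⟩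
  refine ⟨⟨a, ha⟩ * (MulAut.conjNormal b ⟨a, ha⟩)⁻¹, MonoidHom.mem_ker.mpr ?_,
    by simp [MulAut.conjNormal_apply]⟩
  rw [map_mul, map_inv, mem_stabilizer_iff_conj.mp (hS b hb), mul_inv_cancel]

theorem mem_stabilizer_of_subgroupOf_le_ker {c₁ c₂ : B ⧸ A}
    (hχ : (coinvariantDifferences A c₁ c₂).subgroupOf A ≤ χ.ker) {b : B}
    (hb : (b : B ⧸ A) ∈ Subgroup.closure {c₁, c₂}) : b ∈ MulAction.stabilizer B χ := by
  refine mem_stabilizer_iff_conj.mpr fun a => ?_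
  have hmem : a * (MulAut.conjNormal b a)⁻¹ ∈ χ.ker :=
    hχ (Subgroup.subset_closure ⟨a, b, a.2, hb, by simp [MulAut.conjNormal_apply]⟩)
  rw [MonoidHom.mem_ker, map_mul, map_inv, mul_inv_eq_one] at hmem
  exact hmem.symm

theorem forall_commutator_stabilizer_le_iff [IsMulCommutative A] [Finite A]
    (hC : ∀ x y : B, ⁅x, y⁆ ∈ A) :
    (∀ χ : A →* ℂˣ,
      ⁅MulAction.stabilizer B χ, MulAction.stabilizer B χ⁆ ≤ χ.ker.map A.subtype) ↔
    ∀ b₁ b₂ : B, ⁅b₁, b₂⁆ ∈ coinvariantDifferences A b₁ b₂ := by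
  refine ⟨fun h b₁ b₂ => ?_, fun h χ => Subgroup.commutator_le.mpr fun b₁ hb₁ b₂ hb₂ =>
    coinvariantDifferences_le_map_ker hb₁ hb₂ (h b₁ b₂)⟩
  by_contra hnot
  open scoped IsMulCommutative in
  obtain ⟨χ, hker, hχ⟩ := exists_le_ker_apply_ne_one (x := (⟨⁅b₁, b₂⁆, hC b₁ b₂⟩ : A))
    (H := (coinvariantDifferences A b₁ b₂).subgroupOf A) hnot
  have hb₁ := mem_stabilizer_of_subgroupOf_le_ker hker
    (Subgroup.subset_closure (Set.mem_insert _ _))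
  have hb₂ := mem_stabilizer_of_subgroupOf_le_ker hker
    (Subgroup.subset_closure (Set.mem_insert_of_mem _ rfl))
  exact hχ (apply_eq_one_of_mem_map_ker (h χ (Subgroup.commutator_mem_commutator hb₁ hb₂)) _)

end Coinvariants

theorem forall_finrank_charEigenspace_le_one_iff {B : Type} [Group B] [Finite B]
    {A : Subgroup B} [A.Normal] (hC : ∀ x y : B, ⁅x, y⁆ ∈ A) :
    (∀ (V : Type) (_ : AddCommGroup V) (_ : Module ℂ V) (_ : FiniteDimensional ℂ V)
        (π : Representation ℂ B V), IsIrred π →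
        ∀ χ : A →* ℂˣ, finrank ℂ (charEigenspace π A χ) ≤ 1) ↔
    ∀ χ : A →* ℂˣ,
      ⁅MulAction.stabilizer B χ, MulAction.stabilizer B χ⁆ ≤ χ.ker.map A.subtype := by
  refine ⟨fun h χ => ?_, fun h V _ _ _ π hπ χ => finrank_charEigenspace_le_one hπ (h χ)⟩
  obtain ⟨V, _, _, _, π, hπ, h0⟩ :=
    exists_isIrred_charEigenspace_ne_bot _ (charEigenspace_leftRegular_ne_bot χ)
  refine Subgroup.commutator_le.mpr fun b₁ hb₁ b₂ hb₂ =>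
    ⟨⟨_, hC b₁ b₂⟩, MonoidHom.mem_ker.mpr ?_, rfl⟩
  exact apply_commutator_eq_one_of_finrank_le_one h0 (h V _ _ ‹_› π hπ χ) hb₁ hb₂ _

/-- Let `B` be a finite group which is an extension of a finite abelian group `C = B⧸A`
by a finite abelian normal subgroup `A`.  Every irreducible complex representation of
`B` restricts to `A` with all irreducible constituents (characters of `A`) of
multiplicity at most one if and only if the extension has trivial commutator:
for all `c₁, c₂ ∈ C` the commutator of lifts vanishes in the coinvariants
`A_{⟨c₁,c₂⟩}`. -/
theorem multiplicity_one_iff_trivial_commutator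
    {B : Type} [Group B] [Finite B] (A : Subgroup B) [A.Normal]
    (hA : ∀ x ∈ A, ∀ y ∈ A, x * y = y * x)
    (hC : ∀ x y : B, x * y * x⁻¹ * y⁻¹ ∈ A) :
    (∀ (V : Type) (_ : AddCommGroup V) (_ : Module ℂ V) (_ : FiniteDimensional ℂ V)
        (π : Representation ℂ B V), IsIrred π →
        ∀ χ : A →* ℂˣ, finrank ℂ (charEigenspace π A χ) ≤ 1) ↔
    (∀ b₁ b₂ : B, b₁ * b₂ * b₁⁻¹ * b₂⁻¹ ∈
        coinvariantDifferences A (QuotientGroup.mk b₁) (QuotientGroup.mk b₂)) := by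
  have : IsMulCommutative A := ⟨⟨fun x y => Subtype.ext (hA x x.2 y y.2)⟩⟩
  exact (forall_finrank_charEigenspace_le_one_iff hC).trans
    (forall_commutator_stabilizer_le_iff hC)
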